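/- arXiv:1709.10005 — 2 statements merged into one kernel-verified Lean document; each statement's English description precedes it below -/
import Mathlib

section
/- Let N ≥ 2, 1 < p < ∞, p' = p/(p−1), α = (N−p)/(p−1), and fix R > 0. For ε > 0 define u^ε on the closed ball B̄_R of radius R centered at the origin of ℝ^N by u^ε(x) = (∫₀^π e^{√p'·(|x|/ε)·cos θ}(sin θ)^α dθ)/(∫₀^π e^{√p'·(R/ε)·cos θ}(sin θ)^α dθ). Then ε·log u^ε(x) → −√p'·(R−|x|) as ε → 0⁺, uniformly for x ∈ B̄_R. -/
open MeasureTheory Metric Set Filter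
open scoped Topology ENNReal NNReal Real Classical

noncomputable section

/-- The Hessian matrix of a real-valued function, via the second iterated Fréchet derivative. -/
noncomputable def hess {N : ℕ} (f : EuclideanSpace ℝ (Fin N) → ℝ) (x : EuclideanSpace ℝ (Fin N)) :
    Matrix (Fin N) (Fin N) ℝ :=
  fun i j => iteratedFDeriv ℝ 2 f x ![EuclideanSpace.single i 1, EuclideanSpace.single j 1]

/-- The quadratic form ⟨Xv, v⟩ associated to a matrix. -/
noncomputable def qform {N : ℕ} (X : Matrix (Fin N) (Fin N) ℝ) (v : EuclideanSpace ℝ (Fin N)) : ℝ :=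
  ∑ i, ∑ j, X i j * v j * v i

/-- Smallest eigenvalue (via the Rayleigh quotient) of a symmetric matrix. -/
noncomputable def lamMin {N : ℕ} (X : Matrix (Fin N) (Fin N) ℝ) : ℝ :=
  sInf {r | ∃ v : EuclideanSpace ℝ (Fin N), ‖v‖ = 1 ∧ r = qform X v}

/-- Largest eigenvalue (via the Rayleigh quotient) of a symmetric matrix. -/
noncomputable def lamMax {N : ℕ} (X : Matrix (Fin N) (Fin N) ℝ) : ℝ :=
  sSup {r | ∃ v : EuclideanSpace ℝ (Fin N), ‖v‖ = 1 ∧ r = qform X v}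

/-- F(ξ, X) = (1/p)[tr X + (p−2)⟨Xξ,ξ⟩/|ξ|²]. -/
noncomputable def Fop {N : ℕ} (p : ℝ) (ξ : EuclideanSpace ℝ (Fin N))
    (X : Matrix (Fin N) (Fin N) ℝ) : ℝ :=
  (1/p) * (Matrix.trace X + (p - 2) * qform X ξ / ‖ξ‖^2)

/-- Lower semicontinuous relaxation F_*. -/
noncomputable def Flower {N : ℕ} (p : ℝ) (ξ : EuclideanSpace ℝ (Fin N))
    (X : Matrix (Fin N) (Fin N) ℝ) : ℝ :=
  if ξ = 0 then
    (1/p) * (Matrix.trace X + max (p - 2) 0 * lamMin X + min (p - 2) 0 * lamMax X)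
  else Fop p ξ X

/-- Upper semicontinuous relaxation F^*. -/
noncomputable def Fupper {N : ℕ} (p : ℝ) (ξ : EuclideanSpace ℝ (Fin N))
    (X : Matrix (Fin N) (Fin N) ℝ) : ℝ :=
  if ξ = 0 then
    (1/p) * (Matrix.trace X + min (p - 2) 0 * lamMin X + max (p - 2) 0 * lamMax X)
  else Fop p ξ X

/-- Viscosity solution of `u_t = Δ_p^G u` in `Ω × (0,∞)`. -/
def IsViscositySol {N : ℕ} (p : ℝ) (Ω : Set (EuclideanSpace ℝ (Fin N)))
    (u : EuclideanSpace ℝ (Fin N) → ℝ → ℝ) : Prop :=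
  ContinuousOn (fun q : EuclideanSpace ℝ (Fin N) × ℝ => u q.1 q.2) (Ω ×ˢ Set.Ioi 0) ∧
  (∀ φ : EuclideanSpace ℝ (Fin N) × ℝ → ℝ, ContDiff ℝ 2 φ →
    ∀ x ∈ Ω, ∀ t ∈ Set.Ioi (0:ℝ),
      IsLocalMaxOn (fun q : EuclideanSpace ℝ (Fin N) × ℝ => u q.1 q.2 - φ q)
        (Ω ×ˢ Set.Ioi 0) (x, t) →
      deriv (fun s => φ (x, s)) t ≤
        Fupper p (gradient (fun y => φ (y, t)) x) (hess (fun y => φ (y, t)) x)) ∧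
  (∀ φ : EuclideanSpace ℝ (Fin N) × ℝ → ℝ, ContDiff ℝ 2 φ →
    ∀ x ∈ Ω, ∀ t ∈ Set.Ioi (0:ℝ),
      IsLocalMinOn (fun q : EuclideanSpace ℝ (Fin N) × ℝ => u q.1 q.2 - φ q)
        (Ω ×ˢ Set.Ioi 0) (x, t) →
      Flower p (gradient (fun y => φ (y, t)) x) (hess (fun y => φ (y, t)) x) ≤
        deriv (fun s => φ (x, s)) t)

/-- Bounded (viscosity) solution of problem (P): `u_t = Δ_p^G u` in `Ω × (0,∞)`,
`u = 0` on `Ω × {0}`, `u = 1` on `Γ × (0,∞)`; continuous away from `Γ × {0}`. -/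
def IsSolP {N : ℕ} (p : ℝ) (Ω : Set (EuclideanSpace ℝ (Fin N)))
    (u : EuclideanSpace ℝ (Fin N) → ℝ → ℝ) : Prop :=
  (∃ M : ℝ, ∀ x ∈ closure Ω, ∀ t : ℝ, 0 ≤ t → |u x t| ≤ M) ∧
  (∀ x ∈ closure Ω, ∀ t : ℝ, 0 ≤ t → ¬(x ∈ frontier Ω ∧ t = 0) →
    ContinuousWithinAt (fun q : EuclideanSpace ℝ (Fin N) × ℝ => u q.1 q.2)
      (closure Ω ×ˢ Set.Ici 0) (x, t)) ∧
  IsViscositySol p Ω u ∧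
  (∀ x ∈ Ω, u x 0 = 0) ∧
  (∀ y ∈ frontier Ω, ∀ t : ℝ, 0 < t → u y t = 1)

/-- Viscosity solution of the elliptic equation `u − ε² Δ_p^G u = 0` in `Ω`. -/
def IsEllipticViscositySol {N : ℕ} (p ε : ℝ) (Ω : Set (EuclideanSpace ℝ (Fin N)))
    (u : EuclideanSpace ℝ (Fin N) → ℝ) : Prop :=
  ContinuousOn u Ω ∧
  (∀ φ : EuclideanSpace ℝ (Fin N) → ℝ, ContDiff ℝ 2 φ → ∀ x ∈ Ω,
      IsLocalMaxOn (fun y => u y - φ y) Ω x →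
      φ x - ε^2 * Fupper p (gradient φ x) (hess φ x) ≤ 0) ∧
  (∀ φ : EuclideanSpace ℝ (Fin N) → ℝ, ContDiff ℝ 2 φ → ∀ x ∈ Ω,
      IsLocalMinOn (fun y => u y - φ y) Ω x →
      0 ≤ φ x - ε^2 * Flower p (gradient φ x) (hess φ x))

/-- The complementary error function. -/
noncomputable def Erfc (σ : ℝ) : ℝ := (2 / Real.sqrt π) * ∫ τ in Set.Ioi σ, Real.exp (-τ^2)

/-- The explicit radially symmetric solution `u^ε` of the elliptic problem in the ball `B_R`. -/
noncomputable def uEps (N : ℕ) (p R ε : ℝ) (x : EuclideanSpace ℝ (Fin N)) : ℝ :=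
  (∫ θ in (0:ℝ)..π,
      Real.exp (Real.sqrt (p/(p-1)) * (‖x‖/ε) * Real.cos θ) * (Real.sin θ) ^ (((N:ℝ) - p)/(p-1))) /
  (∫ θ in (0:ℝ)..π,
      Real.exp (Real.sqrt (p/(p-1)) * (R/ε) * Real.cos θ) * (Real.sin θ) ^ (((N:ℝ) - p)/(p-1)))

/-!
With `I(s) = ∫₀^π e^{s cos θ} (sin θ)^α dθ` we have `u^ε(x) = I(√p' |x|/ε) / I(√p' R/ε)`, so it
suffices to show `ε log I(a/ε) → a` uniformly for `a` in a bounded interval `[0, A]`. This is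
Laplace's method at the maximum `θ = 0` of `cos`: for `s ≥ 0` and `0 < δ ≤ π`,
`e^{s cos δ} ∫₀^δ (sin θ)^α dθ ≤ I(s) ≤ e^s I(0)`, whence
`a cos δ - O(ε) ≤ ε log I(a/ε) ≤ a + O(ε)`, and `A (1 - cos δ)` is small for small `δ`.
-/

open Real

-- For `α = 2ν` this is `√π Γ(ν + 1/2) (s/2)^(-ν) I_ν(s)`, Poisson's integral for the modified
-- Bessel function `I_ν`.
def besselPoissonIntegral (α s : ℝ) : ℝ := ∫ θ in (0:ℝ)..π, exp (s * cos θ) * sin θ ^ α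

section

variable {α : ℝ}

lemma intervalIntegrable_sin_rpow_zero_pi_div_two (hα : -1 < α) :
    IntervalIntegrable (fun θ => sin θ ^ α) volume 0 (π / 2) := by
  rcases le_or_gt 0 α with hα₀ | hα₀
  · exact ((continuous_rpow_const hα₀).comp continuous_sin).intervalIntegrable _ _
  -- Jordan's inequality `2θ/π ≤ sin θ` compares `sin θ ^ α` with `(2θ/π) ^ α` for `α < 0`.
  refine ((intervalIntegral.intervalIntegrable_rpow' hα).const_mul ((2 / π) ^ α)).mono_fun' ?_ ?_
  · rw [uIoc_of_le (by positivity)]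
    refine ContinuousOn.aestronglyMeasurable ?_ measurableSet_Ioc
    exact continuous_sin.continuousOn.rpow_const fun θ hθ =>
      Or.inl (sin_pos_of_pos_of_lt_pi hθ.1 (by linarith [pi_pos, hθ.2])).ne'
  · rw [EventuallyLE, uIoc_of_le (by positivity), ae_restrict_iff' measurableSet_Ioc]
    filter_upwards with θ ⟨hθ₀, hθ⟩
    have hsin : 0 ≤ sin θ := sin_nonneg_of_nonneg_of_le_pi hθ₀.le (by linarith [pi_pos])
    rw [norm_of_nonneg (rpow_nonneg hsin α), ← mul_rpow (by positivity) hθ₀.le]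
    exact rpow_le_rpow_of_nonpos (by positivity) (mul_le_sin hθ₀.le hθ) hα₀.le

lemma intervalIntegrable_sin_rpow (hα : -1 < α) :
    IntervalIntegrable (fun θ => sin θ ^ α) volume 0 π := by
  have hsymm := (intervalIntegrable_sin_rpow_zero_pi_div_two hα).comp_sub_left π
  simp only [sin_pi_sub, sub_zero, show π - π / 2 = π / 2 by ring] at hsymm
  exact (intervalIntegrable_sin_rpow_zero_pi_div_two hα).trans hsymm.symm

lemma intervalIntegrable_exp_mul_cos_mul_sin_rpow (hα : -1 < α) (s : ℝ) :
    IntervalIntegrable (fun θ => exp (s * cos θ) * sin θ ^ α) volume 0 π :=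
  (intervalIntegrable_sin_rpow hα).continuousOn_mul (by fun_prop)

lemma besselPoissonIntegral_pos (hα : -1 < α) (s : ℝ) : 0 < besselPoissonIntegral α s :=
  intervalIntegral.intervalIntegral_pos_of_pos_on (intervalIntegrable_exp_mul_cos_mul_sin_rpow hα s)
    (fun _ hθ => mul_pos (exp_pos _) (rpow_pos_of_pos (sin_pos_of_pos_of_lt_pi hθ.1 hθ.2) _))
    pi_pos

lemma besselPoissonIntegral_le_exp_mul (hα : -1 < α) {s : ℝ} (hs : 0 ≤ s) :
    besselPoissonIntegral α s ≤ exp s * besselPoissonIntegral α 0 := by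
  simp only [besselPoissonIntegral, zero_mul, exp_zero, one_mul,
    ← intervalIntegral.integral_const_mul]
  refine intervalIntegral.integral_mono_on pi_pos.le
    (intervalIntegrable_exp_mul_cos_mul_sin_rpow hα s)
    ((intervalIntegrable_sin_rpow hα).const_mul _) fun θ hθ => ?_
  exact mul_le_mul_of_nonneg_right (exp_le_exp.2 (mul_le_of_le_one_right hs (cos_le_one θ)))
    (rpow_nonneg (sin_nonneg_of_nonneg_of_le_pi hθ.1 hθ.2) α)

lemma exp_mul_cos_mul_integral_sin_rpow_le_besselPoissonIntegral (hα : -1 < α) {s δ : ℝ}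
    (hs : 0 ≤ s) (hδ₀ : 0 ≤ δ) (hδ : δ ≤ π) :
    exp (s * cos δ) * ∫ θ in (0:ℝ)..δ, sin θ ^ α ≤ besselPoissonIntegral α s := by
  have hsin : ∀ θ ∈ Icc 0 π, 0 ≤ sin θ ^ α := fun θ hθ =>
    rpow_nonneg (sin_nonneg_of_nonneg_of_le_pi hθ.1 hθ.2) α
  have hint := intervalIntegrable_exp_mul_cos_mul_sin_rpow hα s
  have hsub : uIcc 0 δ ⊆ uIcc 0 π := uIcc_subset_uIcc left_mem_uIcc (mem_uIcc_of_le hδ₀ hδ)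
  rw [← intervalIntegral.integral_const_mul]
  calc ∫ θ in (0:ℝ)..δ, exp (s * cos δ) * sin θ ^ α
      ≤ ∫ θ in (0:ℝ)..δ, exp (s * cos θ) * sin θ ^ α := by
        refine intervalIntegral.integral_mono_on hδ₀ ?_ ?_ fun θ hθ => ?_
        · exact ((intervalIntegrable_sin_rpow hα).const_mul _).mono_set hsub
        · exact hint.mono_set hsub
        · refine mul_le_mul_of_nonneg_right (exp_le_exp.2 (mul_le_mul_of_nonneg_left ?_ hs))
            (hsin θ ⟨hθ.1, hθ.2.trans hδ⟩)
          exact cos_le_cos_of_nonneg_of_le_pi hθ.1 hδ hθ.2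
    _ ≤ besselPoissonIntegral α s := by
        refine intervalIntegral.integral_mono_interval le_rfl hδ₀ hδ ?_ hint
        rw [EventuallyLE, ae_restrict_iff' measurableSet_Ioc]
        exact Eventually.of_forall fun θ hθ =>
          mul_nonneg (exp_pos _).le (hsin θ (Ioc_subset_Icc_self hθ))

lemma mul_log_besselPoissonIntegral_div_le (hα : -1 < α) {ε a : ℝ} (hε : 0 < ε) (ha : 0 ≤ a) :
    ε * log (besselPoissonIntegral α (a / ε)) ≤ a + ε * log (besselPoissonIntegral α 0) := by
  have hlog := log_le_log (besselPoissonIntegral_pos hα _)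
    (besselPoissonIntegral_le_exp_mul hα (div_nonneg ha hε.le))
  rw [log_mul (exp_ne_zero _) (besselPoissonIntegral_pos hα 0).ne', log_exp] at hlog
  calc ε * log (besselPoissonIntegral α (a / ε))
      ≤ ε * (a / ε + log (besselPoissonIntegral α 0)) := mul_le_mul_of_nonneg_left hlog hε.le
    _ = a + ε * log (besselPoissonIntegral α 0) := by field_simp

lemma mul_cos_add_mul_log_le_mul_log_besselPoissonIntegral_div (hα : -1 < α) {ε a δ : ℝ}
    (hε : 0 < ε) (ha : 0 ≤ a) (hδ₀ : 0 < δ) (hδ : δ ≤ π) :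
    a * cos δ + ε * log (∫ θ in (0:ℝ)..δ, sin θ ^ α) ≤
      ε * log (besselPoissonIntegral α (a / ε)) := by
  have hc : 0 < ∫ θ in (0:ℝ)..δ, sin θ ^ α :=
    intervalIntegral.intervalIntegral_pos_of_pos_on
      ((intervalIntegrable_sin_rpow hα).mono_set
        (uIcc_subset_uIcc left_mem_uIcc (mem_uIcc_of_le hδ₀.le hδ)))
      (fun θ hθ => rpow_pos_of_pos (sin_pos_of_pos_of_lt_pi hθ.1 (hθ.2.trans_le hδ)) _) hδ₀
  have hlog := log_le_log (by positivity)
    (exp_mul_cos_mul_integral_sin_rpow_le_besselPoissonIntegral hα (div_nonneg ha hε.le)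
      hδ₀.le hδ)
  rw [log_mul (exp_ne_zero _) hc.ne', log_exp] at hlog
  calc a * cos δ + ε * log (∫ θ in (0:ℝ)..δ, sin θ ^ α)
      = ε * (a / ε * cos δ + log (∫ θ in (0:ℝ)..δ, sin θ ^ α)) := by field_simp
    _ ≤ ε * log (besselPoissonIntegral α (a / ε)) := mul_le_mul_of_nonneg_left hlog hε.le

theorem tendstoUniformlyOn_mul_log_besselPoissonIntegral_div (hα : -1 < α) (A : ℝ) :
    TendstoUniformlyOn (fun ε a => ε * log (besselPoissonIntegral α (a / ε))) id (𝓝[>] 0)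
      (Icc 0 A) := by
  rw [Metric.tendstoUniformlyOn_iff]
  intro η hη
  have hδ_ev : ∀ᶠ δ in 𝓝[>] (0:ℝ), (δ ≤ π ∧ A * (1 - cos δ) < η / 2) ∧ 0 < δ := by
    have hcos : Tendsto (fun δ => A * (1 - cos δ)) (𝓝 0) (𝓝 0) :=
      (by fun_prop : Continuous fun δ => A * (1 - cos δ)).tendsto' 0 0 (by simp)
    exact ((eventually_le_nhds pi_pos).and (hcos.eventually (gt_mem_nhds (half_pos hη)))
      |>.filter_mono nhdsWithin_le_nhds |>.and self_mem_nhdsWithin)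
  obtain ⟨δ, ⟨hδ, hδη⟩, hδ₀⟩ := hδ_ev.exists
  have hsmall : ∀ᶠ ε in 𝓝[>] (0:ℝ), ε * (|log (besselPoissonIntegral α 0)| +
      |log (∫ θ in (0:ℝ)..δ, sin θ ^ α)|) < η / 2 := by
    refine (Tendsto.eventually ?_ (gt_mem_nhds (half_pos hη))).filter_mono nhdsWithin_le_nhds
    exact (by fun_prop : Continuous fun ε : ℝ => ε * _).tendsto' 0 0 (zero_mul _)
  filter_upwards [hsmall, self_mem_nhdsWithin] with ε hεη (hε : 0 < ε) a ⟨ha₀, haA⟩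
  have hupper := mul_log_besselPoissonIntegral_div_le hα hε ha₀
  have hlower := mul_cos_add_mul_log_le_mul_log_besselPoissonIntegral_div hα hε ha₀ hδ₀ hδ
  have hcos : a * (1 - cos δ) ≤ A * (1 - cos δ) :=
    mul_le_mul_of_nonneg_right haA (sub_nonneg.2 (cos_le_one δ))
  have hC := mul_le_mul_of_nonneg_left (le_abs_self (log (besselPoissonIntegral α 0))) hε.le
  have hc := mul_le_mul_of_nonneg_left (neg_abs_le (log (∫ θ in (0:ℝ)..δ, sin θ ^ α))) hε.le
  have hC₀ := mul_nonneg hε.le (abs_nonneg (log (besselPoissonIntegral α 0)))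
  have hc₀ := mul_nonneg hε.le (abs_nonneg (log (∫ θ in (0:ℝ)..δ, sin θ ^ α)))
  rw [id, dist_eq, abs_lt]
  constructor <;> linarith

end

theorem stmt1_general (N : ℕ) (hN : 2 ≤ N) (p R : ℝ) (hp : 1 < p) :
    TendstoUniformlyOn (fun (ε : ℝ) (x : EuclideanSpace ℝ (Fin N)) => ε * Real.log (uEps N p R ε x))
      (fun x => -Real.sqrt (p/(p-1)) * (R - ‖x‖)) (𝓝[>] (0:ℝ))
      (Metric.closedBall (0 : EuclideanSpace ℝ (Fin N)) R) := by
  set q := Real.sqrt (p / (p - 1))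
  set α := ((N:ℝ) - p) / (p - 1)
  have hα : -1 < α := by
    have hN' : (2:ℝ) ≤ N := by exact_mod_cast hN
    rw [lt_div_iff₀ (sub_pos.2 hp)]
    linarith
  set F := fun ε a => ε * log (besselPoissonIntegral α (a / ε))
  have hF := tendstoUniformlyOn_mul_log_besselPoissonIntegral_div hα (q * R)
  have hball : ∀ x ∈ closedBall (0 : EuclideanSpace ℝ (Fin N)) R, ‖x‖ ≤ R := by simp
  have hnorm : TendstoUniformlyOn (fun ε x => F ε (q * ‖x‖)) (fun x => q * ‖x‖) (𝓝[>] 0)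
      (closedBall (0 : EuclideanSpace ℝ (Fin N)) R) :=
    (hF.comp fun x => q * ‖x‖).mono fun x hx =>
      ⟨by positivity, mul_le_mul_of_nonneg_left (hball x hx) (sqrt_nonneg _)⟩
  have hboundary : TendstoUniformlyOn (fun ε (_ : EuclideanSpace ℝ (Fin N)) => F ε (q * R))
      (fun _ => q * R) (𝓝[>] 0) (closedBall 0 R) :=
    (hF.comp fun _ => q * R).mono fun x hx =>
      ⟨mul_nonneg (sqrt_nonneg _) ((norm_nonneg x).trans (hball x hx)), le_rfl⟩
  convert hnorm.fun_sub hboundary using 1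
  · funext ε x
    change ε * log (besselPoissonIntegral α (q * (‖x‖ / ε)) /
      besselPoissonIntegral α (q * (R / ε))) = _
    rw [log_div (besselPoissonIntegral_pos hα _).ne' (besselPoissonIntegral_pos hα _).ne', mul_sub]
    simp only [F, besselPoissonIntegral, mul_div_assoc]
  · funext x
    ring

/-- elliptic asymptotics  `ε log u^ε(x) → −√p' (R − |x|)`,
uniformly on the closed ball `B̄_R`. -/
theorem stmt1 (N : ℕ) (hN : 2 ≤ N) (p R : ℝ) (hp : 1 < p) (hR : 0 < R) :
    TendstoUniformlyOn (fun (ε : ℝ) (x : EuclideanSpace ℝ (Fin N)) => ε * Real.log (uEps N p R ε x))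
      (fun x => -Real.sqrt (p/(p-1)) * (R - ‖x‖)) (𝓝[>] (0:ℝ))
      (Metric.closedBall (0 : EuclideanSpace ℝ (Fin N)) R) :=
  stmt1_general N hN p R hp

end
end

section
/- Let N ≥ 2, 1 < p < ∞, p' = p/(p−1), and let H = {x ∈ ℝ^N : x₁ > 0}. Define Ψ(x,t) = Erfc(√p'·x₁/(2√t)) for x ∈ H̄ and t > 0. Then: (i) Ψ is smooth on H×(0,∞), its spatial gradient never vanishes there, and ∂_t Ψ(x,t) = (1/p)[ΔΨ(x,t) + (p−2)⟨∇²Ψ(x,t)∇Ψ(x,t), ∇Ψ(x,t)⟩/|∇Ψ(x,t)|²] = (1/p')·∂²Ψ/∂x₁²(x,t) at every (x,t) ∈ H×(0,∞); (ii) Ψ(x,t) → 0 as t → 0⁺ for every x with x₁ > 0, and Ψ(x,t) = 1 whenever x₁ = 0; (iii) for every δ > 0, 4t·log Ψ(x,t) → −p'·x₁² as t → 0⁺, uniformly on the strip {x ∈ ℝ^N : 0 ≤ x₁ ≤ δ}. -/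
open MeasureTheory Metric Set Filter
open scoped Topology ENNReal NNReal Real Classical

noncomputable section

/-!
Ψ depends on `x` only through `σ = √p' x₁ / (2√t)`, so its spatial gradient is a nonzero multiple
of `e₁` and its Hessian a multiple of `e₁ ⊗ e₁`. On such data the normalized `p`-Laplacian reduces
to `(p - 1)/p · ∂²₁ = (1/p') ∂²₁`, and `Erfc (a ξ / (2√t))` solves `a² ∂ₜ = ∂²_ξ` because
`Erfc'' σ = -2σ Erfc' σ`.

For the small-time asymptotics, the Gaussian tail bounds `(2/√π) e^{-(σ+1)²} ≤ Erfc σ ≤ e^{-σ²}`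
(`σ ≥ 0`) give `|log Erfc σ + σ²| ≤ 1 - log (2/√π) + 2σ`; multiplying by `4t` and using
`4tσ² = p' x₁²`, `8tσ = 4√p' x₁ √t ≤ 4√p' δ √t`, the error is `O(t + √t)` uniformly on the strip.
-/

lemma integrable_exp_neg_sq : Integrable (fun τ : ℝ => Real.exp (-τ ^ 2)) := by
  simpa using integrable_exp_neg_mul_sq one_pos

lemma integral_Ioi_zero_exp_neg_sq : ∫ τ in Ioi (0 : ℝ), Real.exp (-τ ^ 2) = √π / 2 := by
  simpa using integral_gaussian_Ioi 1

lemma Erfc_eq_one_sub_intervalIntegral (σ : ℝ) :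
    Erfc σ = 1 - 2 / √π * ∫ τ in (0 : ℝ)..σ, Real.exp (-τ ^ 2) := by
  have hπ : √π ≠ 0 := (Real.sqrt_pos.2 Real.pi_pos).ne'
  rw [← intervalIntegral.integral_Ioi_sub_Ioi' integrable_exp_neg_sq.integrableOn
    integrable_exp_neg_sq.integrableOn, integral_Ioi_zero_exp_neg_sq, Erfc]
  field_simp
  ring

lemma Erfc_zero : Erfc 0 = 1 := by
  simp [Erfc_eq_one_sub_intervalIntegral]

lemma hasDerivAt_Erfc (σ : ℝ) : HasDerivAt Erfc (-(2 / √π) * Real.exp (-σ ^ 2)) σ := by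
  have hint : HasDerivAt (fun s => ∫ τ in (0 : ℝ)..s, Real.exp (-τ ^ 2)) (Real.exp (-σ ^ 2)) σ :=
    intervalIntegral.integral_hasDerivAt_right integrable_exp_neg_sq.intervalIntegrable
      integrable_exp_neg_sq.1.stronglyMeasurableAtFilter (by fun_prop)
  rw [funext Erfc_eq_one_sub_intervalIntegral]
  simpa using (hint.const_mul (2 / √π)).const_sub 1

lemma deriv_Erfc (σ : ℝ) : deriv Erfc σ = -(2 / √π) * Real.exp (-σ ^ 2) :=
  (hasDerivAt_Erfc σ).deriv

lemma deriv_Erfc_neg (σ : ℝ) : deriv Erfc σ < 0 := by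
  rw [deriv_Erfc, neg_mul, neg_lt_zero]
  positivity

lemma hasDerivAt_deriv_Erfc (σ : ℝ) :
    HasDerivAt (deriv Erfc) (-2 * σ * deriv Erfc σ) σ := by
  have hsq : HasDerivAt (fun s : ℝ => -s ^ 2) (-(2 * σ)) σ := by
    simpa using (hasDerivAt_pow 2 σ).fun_neg
  rw [funext deriv_Erfc]
  exact (hsq.exp.const_mul (-(2 / √π))).congr_deriv (by ring)

lemma contDiff_Erfc : ContDiff ℝ (⊤ : ℕ∞) Erfc := by
  rw [contDiff_infty_iff_deriv]
  refine ⟨fun σ => (hasDerivAt_Erfc σ).differentiableAt, ?_⟩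
  rw [funext deriv_Erfc]
  fun_prop

lemma tendsto_Erfc_atTop : Tendsto Erfc atTop (𝓝 0) := by
  have hint := intervalIntegral_tendsto_integral_Ioi 0
    integrable_exp_neg_sq.integrableOn tendsto_id
  rw [integral_Ioi_zero_exp_neg_sq] at hint
  have hπ : √π ≠ 0 := (Real.sqrt_pos.2 Real.pi_pos).ne'
  have hlim : 1 - 2 / √π * (√π / 2) = 0 := by field_simp; norm_num
  have h := (hint.const_mul (2 / √π)).const_sub 1
  rw [hlim] at h
  rwa [funext Erfc_eq_one_sub_intervalIntegral]

lemma Erfc_le_exp_neg_sq {σ : ℝ} (hσ : 0 ≤ σ) : Erfc σ ≤ Real.exp (-σ ^ 2) := by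
  have hshift : ∫ τ in Ioi σ, Real.exp (-τ ^ 2) = ∫ u in Ioi (0 : ℝ), Real.exp (-(u + σ) ^ 2) := by
    have h := (measurePreserving_add_right (volume : Measure ℝ) σ).setIntegral_image_emb
      (MeasurableEquiv.addRight σ).measurableEmbedding (fun τ => Real.exp (-τ ^ 2)) (Ioi 0)
    simpa [Set.image_add_const_Ioi] using h
  -- `(u + σ)² ≥ u² + σ²` for `u, σ ≥ 0` reduces the tail to a multiple of the half-line integral.
  have hbound : ∫ u in Ioi (0 : ℝ), Real.exp (-(u + σ) ^ 2)
      ≤ ∫ u in Ioi (0 : ℝ), Real.exp (-σ ^ 2) * Real.exp (-u ^ 2) := by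
    refine setIntegral_mono_on ?_ (integrable_exp_neg_sq.const_mul _).integrableOn
      measurableSet_Ioi fun u hu => ?_
    · simpa using (integrable_exp_neg_sq.comp_add_right σ).integrableOn
    · rw [← Real.exp_add, Real.exp_le_exp]
      nlinarith [mul_nonneg (le_of_lt hu) hσ]
  rw [integral_const_mul, integral_Ioi_zero_exp_neg_sq, ← hshift] at hbound
  have hπ : 0 < √π := Real.sqrt_pos.2 Real.pi_pos
  calc Erfc σ ≤ 2 / √π * (Real.exp (-σ ^ 2) * (√π / 2)) :=
        mul_le_mul_of_nonneg_left hbound (by positivity)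
    _ = Real.exp (-σ ^ 2) := by field_simp

lemma mul_exp_neg_add_one_sq_le_Erfc {σ : ℝ} (hσ : 0 ≤ σ) :
    2 / √π * Real.exp (-(σ + 1) ^ 2) ≤ Erfc σ := by
  have hIoc : Real.exp (-(σ + 1) ^ 2) ≤ ∫ τ in Ioc σ (σ + 1), Real.exp (-τ ^ 2) := by
    have h := setIntegral_ge_of_const_le_real (μ := volume) (f := fun τ => Real.exp (-τ ^ 2))
      (c := Real.exp (-(σ + 1) ^ 2)) (s := Ioc σ (σ + 1)) measurableSet_Ioc
      (by simp [Real.volume_Ioc])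
      (fun τ hτ => by rw [Real.exp_le_exp]; nlinarith [hτ.1, hτ.2])
      integrable_exp_neg_sq.integrableOn
    simpa [Real.volume_real_Ioc] using h
  refine mul_le_mul_of_nonneg_left (hIoc.trans ?_) (by positivity)
  exact setIntegral_mono_set integrable_exp_neg_sq.integrableOn
    (Eventually.of_forall fun τ => (Real.exp_pos _).le) Ioc_subset_Ioi_self.eventuallyLE

lemma abs_log_Erfc_add_sq_le {σ : ℝ} (hσ : 0 ≤ σ) :
    |Real.log (Erfc σ) + σ ^ 2| ≤ 1 - Real.log (2 / √π) + 2 * σ := by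
  have hlower := mul_exp_neg_add_one_sq_le_Erfc hσ
  have hpos : 0 < Erfc σ := lt_of_lt_of_le (by positivity) hlower
  have hup : Real.log (Erfc σ) ≤ -σ ^ 2 := by
    simpa using Real.log_le_log hpos (Erfc_le_exp_neg_sq hσ)
  have hlow : Real.log (2 / √π) - (σ + 1) ^ 2 ≤ Real.log (Erfc σ) := by
    have h := Real.log_le_log (by positivity) hlower
    rwa [Real.log_mul (by positivity) (by positivity), Real.log_exp, ← sub_eq_add_neg] at h
  rw [abs_of_nonpos (by linarith)]
  nlinarith

section CoordinateFunction

variable {N : ℕ} (i : Fin N)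

lemma proj_single_one (j : Fin N) :
    (EuclideanSpace.proj i : EuclideanSpace ℝ (Fin N) →L[ℝ] ℝ) (EuclideanSpace.single j 1) =
      if j = i then 1 else 0 := by
  simp [eq_comm]

lemma hasFDerivAt_comp_apply {g : ℝ → ℝ} {g' : ℝ} {x : EuclideanSpace ℝ (Fin N)}
    (hg : HasDerivAt g g' (x i)) :
    HasFDerivAt (fun y : EuclideanSpace ℝ (Fin N) => g (y i))
      (g' • (EuclideanSpace.proj i : EuclideanSpace ℝ (Fin N) →L[ℝ] ℝ)) x := by
  have hproj : HasFDerivAt (fun y : EuclideanSpace ℝ (Fin N) => y i)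
      (EuclideanSpace.proj i : EuclideanSpace ℝ (Fin N) →L[ℝ] ℝ) x :=
    (EuclideanSpace.proj i : EuclideanSpace ℝ (Fin N) →L[ℝ] ℝ).hasFDerivAt
  exact hg.comp_hasFDerivAt x hproj

lemma hasGradientAt_comp_apply {g : ℝ → ℝ} {g' : ℝ} {x : EuclideanSpace ℝ (Fin N)}
    (hg : HasDerivAt g g' (x i)) :
    HasGradientAt (fun y : EuclideanSpace ℝ (Fin N) => g (y i))
      (g' • EuclideanSpace.single i 1) x := by
  have hdual : InnerProductSpace.toDual ℝ (EuclideanSpace ℝ (Fin N))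
      (g' • EuclideanSpace.single i 1) = g' • EuclideanSpace.proj i := by
    ext v
    simp [EuclideanSpace.inner_single_left]
  rw [hasGradientAt_iff_hasFDerivAt, hdual]
  exact hasFDerivAt_comp_apply i hg

lemma hess_comp_apply {g g' : ℝ → ℝ} {g'' : ℝ} {x : EuclideanSpace ℝ (Fin N)}
    (hg : ∀ s, HasDerivAt g (g' s) s) (hg' : HasDerivAt g' g'' (x i)) :
    hess (fun y : EuclideanSpace ℝ (Fin N) => g (y i)) x = Matrix.single i i g'' := by
  have hfderiv : fderiv ℝ (fun y : EuclideanSpace ℝ (Fin N) => g (y i)) =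
      fun y => g' (y i) • (EuclideanSpace.proj i : EuclideanSpace ℝ (Fin N) →L[ℝ] ℝ) :=
    funext fun y => (hasFDerivAt_comp_apply i (hg (y i))).fderiv
  have hsecond := (hasFDerivAt_comp_apply i hg').smul_const
    (EuclideanSpace.proj i : EuclideanSpace ℝ (Fin N) →L[ℝ] ℝ)
  ext j l
  rw [hess, iteratedFDeriv_two_apply, hfderiv, hsecond.fderiv]
  simp only [ContinuousLinearMap.smulRight_apply, Matrix.cons_val_zero, Matrix.cons_val_one,
    FunLike.coe_smul, Pi.smul_apply, smul_eq_mul, proj_single_one,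
    Matrix.single_apply]
  split_ifs <;> grind

lemma qform_single_same (M : ℝ) (v : EuclideanSpace ℝ (Fin N)) :
    qform (Matrix.single i i M) v = M * v i ^ 2 := by
  simp [qform, Matrix.single_apply, ite_and, sq, mul_assoc]

lemma Fop_smul_single {p C : ℝ} (hC : C ≠ 0) (M : ℝ) :
    Fop p (C • EuclideanSpace.single i 1) (Matrix.single i i M) = (p - 1) / p * M := by
  have hnorm : ‖C • EuclideanSpace.single i (1 : ℝ)‖ ^ 2 = C ^ 2 := by
    rw [norm_smul, PiLp.norm_single, norm_one, mul_one, Real.norm_eq_abs, sq_abs]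
  rw [Fop, Matrix.trace_single_eq_same, qform_single_same, hnorm]
  simp only [PiLp.smul_apply, PiLp.single_eq_same, smul_eq_mul, mul_one]
  field_simp
  ring

end CoordinateFunction

def erfcProfile (a ξ t : ℝ) : ℝ := Erfc (a / (2 * √t) * ξ)

lemma hasDerivAt_erfcProfile_space (a ξ t : ℝ) :
    HasDerivAt (fun η => erfcProfile a η t) (a / (2 * √t) * deriv Erfc (a / (2 * √t) * ξ)) ξ := by
  rw [deriv_Erfc]
  have hk := (hasDerivAt_id ξ).const_mul (a / (2 * √t))
  exact (hasDerivAt_Erfc _).comp ξ hk |>.congr_deriv (by simp only [id]; ring)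

lemma hasDerivAt_const_mul_deriv_Erfc_const_mul (k ξ : ℝ) :
    HasDerivAt (fun η => k * deriv Erfc (k * η)) (-2 * k ^ 3 * ξ * deriv Erfc (k * ξ)) ξ := by
  have h := ((hasDerivAt_deriv_Erfc (k * ξ)).comp ξ ((hasDerivAt_id ξ).const_mul k)).const_mul k
  exact h.congr_deriv (by ring)

lemma hasDerivAt_div_two_sqrt {t : ℝ} (ht : 0 < t) :
    HasDerivAt (fun s => 1 / (2 * √s)) (-(1 / (2 * √t)) / (2 * t)) t := by
  have hsqrt : √t ≠ 0 := (Real.sqrt_pos.2 ht).ne'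
  have h := ((Real.hasDerivAt_sqrt ht.ne').const_mul 2).inv (by positivity)
  simp only [one_div]
  refine h.congr_deriv ?_
  field_simp
  rw [Real.sq_sqrt ht.le]

lemma hasDerivAt_erfcProfile_time {a : ℝ} (ha : a ≠ 0) (ξ : ℝ) {t : ℝ} (ht : 0 < t) :
    HasDerivAt (erfcProfile a ξ)
      (1 / a ^ 2 * (-2 * (a / (2 * √t)) ^ 3 * ξ * deriv Erfc (a / (2 * √t) * ξ))) t := by
  have hsqrt : √t ≠ 0 := (Real.sqrt_pos.2 ht).ne'
  have hk : HasDerivAt (fun s => a / (2 * √s) * ξ) (a * (-(1 / (2 * √t)) / (2 * t)) * ξ) t := by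
    simpa only [mul_one_div] using ((hasDerivAt_div_two_sqrt ht).const_mul a).mul_const ξ
  refine ((hasDerivAt_Erfc _).comp t hk).congr_deriv ?_
  rw [deriv_Erfc]
  field_simp
  rw [Real.sq_sqrt ht.le]
  ring

section CoordinateProfile

variable {N : ℕ} (i : Fin N) {a t : ℝ} (x : EuclideanSpace ℝ (Fin N))

lemma gradient_erfcProfile :
    gradient (fun y : EuclideanSpace ℝ (Fin N) => erfcProfile a (y i) t) x =
      (a / (2 * √t) * deriv Erfc (a / (2 * √t) * x i)) • EuclideanSpace.single i 1 :=
  (hasGradientAt_comp_apply i (g := fun η => erfcProfile a η t)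
    (hasDerivAt_erfcProfile_space a (x i) t)).gradient

lemma hess_erfcProfile :
    hess (fun y : EuclideanSpace ℝ (Fin N) => erfcProfile a (y i) t) x =
      Matrix.single i i (-2 * (a / (2 * √t)) ^ 3 * x i * deriv Erfc (a / (2 * √t) * x i)) :=
  hess_comp_apply i (g := fun η => erfcProfile a η t) (fun η => hasDerivAt_erfcProfile_space a η t)
    (hasDerivAt_const_mul_deriv_Erfc_const_mul _ (x i))

lemma mul_deriv_Erfc_ne_zero (ha : a ≠ 0) (ht : 0 < t) :
    a / (2 * √t) * deriv Erfc (a / (2 * √t) * x i) ≠ 0 :=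
  mul_ne_zero (div_ne_zero ha (by positivity)) (deriv_Erfc_neg _).ne

lemma gradient_erfcProfile_ne_zero (ha : a ≠ 0) (ht : 0 < t) :
    gradient (fun y : EuclideanSpace ℝ (Fin N) => erfcProfile a (y i) t) x ≠ 0 := by
  rw [gradient_erfcProfile]
  exact smul_ne_zero (mul_deriv_Erfc_ne_zero i x ha ht) (by simp)

lemma Fop_gradient_hess_erfcProfile (p : ℝ) (ha : a ≠ 0) (ht : 0 < t) :
    Fop p (gradient (fun y : EuclideanSpace ℝ (Fin N) => erfcProfile a (y i) t) x)
        (hess (fun y : EuclideanSpace ℝ (Fin N) => erfcProfile a (y i) t) x) =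
      (p - 1) / p * hess (fun y : EuclideanSpace ℝ (Fin N) => erfcProfile a (y i) t) x i i := by
  rw [gradient_erfcProfile, hess_erfcProfile, Fop_smul_single i (mul_deriv_Erfc_ne_zero i x ha ht),
    Matrix.single_apply_same]

lemma deriv_erfcProfile_time (ha : a ≠ 0) (ht : 0 < t) :
    deriv (fun s => erfcProfile a (x i) s) t =
      1 / a ^ 2 * hess (fun y : EuclideanSpace ℝ (Fin N) => erfcProfile a (y i) t) x i i := by
  rw [hess_erfcProfile, Matrix.single_apply_same]
  exact (hasDerivAt_erfcProfile_time ha (x i) ht).deriv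

end CoordinateProfile

lemma contDiffOn_erfcProfile_comp {E : Type*} [NormedAddCommGroup E] [NormedSpace ℝ E]
    (a : ℝ) {ℓ : E → ℝ} (hℓ : ContDiff ℝ (⊤ : ℕ∞) ℓ) :
    ContDiffOn ℝ (⊤ : ℕ∞) (fun q : E × ℝ => erfcProfile a (ℓ q.1) q.2) (univ ×ˢ Ioi 0) := by
  intro q hq
  have hsqrt : ContDiffAt ℝ (⊤ : ℕ∞) (fun q : E × ℝ => √q.2) q :=
    (Real.contDiffAt_sqrt (ne_of_gt hq.2)).comp q contDiffAt_snd
  have hk : ContDiffAt ℝ (⊤ : ℕ∞) (fun q : E × ℝ => a / (2 * √q.2)) q :=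
    contDiffAt_const.div (contDiffAt_const.mul hsqrt)
      (mul_ne_zero two_ne_zero (Real.sqrt_pos.2 hq.2).ne')
  exact (contDiff_Erfc.contDiffAt.comp q
    (hk.mul (hℓ.comp contDiff_fst).contDiffAt)).contDiffWithinAt

lemma erfcProfile_zero_left (a t : ℝ) : erfcProfile a 0 t = 1 := by
  simp [erfcProfile, Erfc_zero]

lemma tendsto_erfcProfile_nhdsGT_zero {a ξ : ℝ} (ha : 0 < a) (hξ : 0 < ξ) :
    Tendsto (erfcProfile a ξ) (𝓝[>] 0) (𝓝 0) := by
  have hsqrt : Tendsto (fun s => 2 * √s) (𝓝[>] 0) (𝓝[>] 0) := by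
    refine tendsto_nhdsWithin_of_tendsto_nhds_of_eventually_within _ ?_ ?_
    · simpa using ((Real.continuous_sqrt.tendsto 0).const_mul 2).mono_left nhdsWithin_le_nhds
    · filter_upwards [self_mem_nhdsWithin] with s hs
      exact mul_pos two_pos (Real.sqrt_pos.2 hs)
  have hk : Tendsto (fun s => a / (2 * √s)) (𝓝[>] 0) atTop := by
    simpa only [div_eq_mul_inv, Function.comp_def] using
      (tendsto_inv_nhdsGT_zero.comp hsqrt).const_mul_atTop ha
  exact tendsto_Erfc_atTop.comp (hk.atTop_mul_const hξ)

lemma abs_four_mul_log_erfcProfile_add_le {a ξ t : ℝ} (ha : 0 ≤ a) (hξ : 0 ≤ ξ) (ht : 0 < t) :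
    |4 * t * Real.log (erfcProfile a ξ t) + a ^ 2 * ξ ^ 2|
      ≤ 4 * t * (1 - Real.log (2 / √π)) + 4 * a * ξ * √t := by
  have hsqrt : 0 < √t := Real.sqrt_pos.2 ht
  set σ := a / (2 * √t) * ξ with hσ
  have hσ0 : 0 ≤ σ := by positivity
  have hsq : 4 * t * σ ^ 2 = a ^ 2 * ξ ^ 2 := by
    rw [hσ, mul_pow, div_pow, mul_pow, Real.sq_sqrt ht.le]
    field_simp
    ring
  have hlin : 4 * t * (2 * σ) = 4 * a * ξ * √t := by
    rw [hσ]
    field_simp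
    rw [Real.sq_sqrt ht.le]
    ring
  calc |4 * t * Real.log (Erfc σ) + a ^ 2 * ξ ^ 2|
      = 4 * t * |Real.log (Erfc σ) + σ ^ 2| := by
        rw [← hsq, ← mul_add, abs_mul, abs_of_pos (by positivity)]
    _ ≤ 4 * t * (1 - Real.log (2 / √π) + 2 * σ) := by
        gcongr
        exact abs_log_Erfc_add_sq_le hσ0
    _ = 4 * t * (1 - Real.log (2 / √π)) + 4 * a * ξ * √t := by rw [← hlin]; ring

lemma tendstoUniformlyOn_of_dist_le {ι α : Type*} {l : Filter ι} {F : ι → α → ℝ} {f : α → ℝ}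
    {s : Set α} {b : ι → ℝ} (hb : Tendsto b l (𝓝 0))
    (hF : ∀ᶠ i in l, ∀ x ∈ s, dist (f x) (F i x) ≤ b i) :
    TendstoUniformlyOn F f l s := by
  rw [Metric.tendstoUniformlyOn_iff]
  intro ε hε
  filter_upwards [hF, hb.eventually_lt_const hε] with i hi hbi x hx
  exact (hi x hx).trans_lt hbi

lemma tendstoUniformlyOn_four_mul_log_erfcProfile {α : Type*} {a : ℝ} (ha : 0 ≤ a) (ℓ : α → ℝ)
    (δ : ℝ) :
    TendstoUniformlyOn (fun t x => 4 * t * Real.log (erfcProfile a (ℓ x) t))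
      (fun x => -a ^ 2 * ℓ x ^ 2) (𝓝[>] 0) {x | 0 ≤ ℓ x ∧ ℓ x ≤ δ} := by
  refine tendstoUniformlyOn_of_dist_le
    (b := fun t => 4 * t * (1 - Real.log (2 / √π)) + 4 * a * δ * √t) ?_ ?_
  · have hcont : Continuous fun t => 4 * t * (1 - Real.log (2 / √π)) + 4 * a * δ * √t := by
      fun_prop
    simpa using (hcont.tendsto 0).mono_left nhdsWithin_le_nhds
  · filter_upwards [self_mem_nhdsWithin] with t ht x hx
    rw [Real.dist_eq, abs_sub_comm, neg_mul, sub_neg_eq_add]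
    refine (abs_four_mul_log_erfcProfile_add_le ha hx.1 ht).trans ?_
    gcongr
    exact hx.2

theorem stmt3_general (N : ℕ) (p p' : ℝ) (hp : 1 < p) (hp' : p' = p/(p-1))
    (i1 : Fin N)
    (Ψ : EuclideanSpace ℝ (Fin N) → ℝ → ℝ)
    (hΨ : ∀ x t, Ψ x t = Erfc (Real.sqrt p' * x i1 / (2 * Real.sqrt t))) :
    (ContDiffOn ℝ (⊤ : ℕ∞) (fun q : EuclideanSpace ℝ (Fin N) × ℝ => Ψ q.1 q.2)
        ({x : EuclideanSpace ℝ (Fin N) | 0 < x i1} ×ˢ Set.Ioi 0) ∧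
      (∀ x : EuclideanSpace ℝ (Fin N), 0 < x i1 → ∀ t : ℝ, 0 < t →
        gradient (fun y => Ψ y t) x ≠ 0 ∧
        deriv (fun s => Ψ x s) t =
          Fop p (gradient (fun y => Ψ y t) x) (hess (fun y => Ψ y t) x) ∧
        deriv (fun s => Ψ x s) t = (1/p') * hess (fun y => Ψ y t) x i1 i1)) ∧
    ((∀ x : EuclideanSpace ℝ (Fin N), 0 < x i1 →
        Filter.Tendsto (fun t => Ψ x t) (𝓝[>] (0:ℝ)) (𝓝 0)) ∧
      (∀ x : EuclideanSpace ℝ (Fin N), x i1 = 0 → ∀ t : ℝ, 0 < t → Ψ x t = 1)) ∧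
    (∀ δ : ℝ, 0 < δ →
      TendstoUniformlyOn (fun (t : ℝ) (x : EuclideanSpace ℝ (Fin N)) => 4 * t * Real.log (Ψ x t))
        (fun x => -p' * (x i1)^2) (𝓝[>] (0:ℝ))
        {x : EuclideanSpace ℝ (Fin N) | 0 ≤ x i1 ∧ x i1 ≤ δ}) := by
  have hp'pos : 0 < p' := hp' ▸ div_pos (by linarith) (by linarith)
  have ha : 0 < √p' := Real.sqrt_pos.2 hp'pos
  have ha2 : √p' ^ 2 = p' := Real.sq_sqrt hp'pos.le
  have hinv : 1 / p' = (p - 1) / p := by rw [hp', one_div_div]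
  obtain rfl : Ψ = fun x t => erfcProfile √p' (x i1) t := by
    funext x t
    rw [hΨ, erfcProfile, mul_div_right_comm]
  refine ⟨⟨?_, fun x _ t ht => ?_⟩, ⟨fun x hx => tendsto_erfcProfile_nhdsGT_zero ha hx,
    fun x hx t _ => by simp only [hx, erfcProfile_zero_left]⟩, fun δ _ => ?_⟩
  · exact (contDiffOn_erfcProfile_comp _ (EuclideanSpace.proj i1).contDiff).mono
      (prod_mono (subset_univ _) subset_rfl)
  · rw [deriv_erfcProfile_time i1 x ha.ne' ht, ha2,
      Fop_gradient_hess_erfcProfile i1 x p ha.ne' ht, hinv]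
    exact ⟨gradient_erfcProfile_ne_zero i1 x ha.ne' ht, rfl, rfl⟩
  · simpa only [ha2] using tendstoUniformlyOn_four_mul_log_erfcProfile ha.le
      (fun x : EuclideanSpace ℝ (Fin N) => x i1) δ

/-- the one-dimensional solution `Ψ(x,t) = Erfc(√p'·x₁/(2√t))` in the half-space
`H = {x₁ > 0}`: (i) smoothness, nonvanishing spatial gradient, and the PDE; (ii) initial and
boundary values; (iii) `4t log Ψ(x,t) → −p' x₁²` uniformly on strips `0 ≤ x₁ ≤ δ`. -/
theorem stmt3 (N : ℕ) (hN : 2 ≤ N) (p p' : ℝ) (hp : 1 < p) (hp' : p' = p/(p-1))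
    (i1 : Fin N) (hi1 : (i1 : ℕ) = 0)
    (Ψ : EuclideanSpace ℝ (Fin N) → ℝ → ℝ)
    (hΨ : ∀ x t, Ψ x t = Erfc (Real.sqrt p' * x i1 / (2 * Real.sqrt t))) :
    (ContDiffOn ℝ (⊤ : ℕ∞) (fun q : EuclideanSpace ℝ (Fin N) × ℝ => Ψ q.1 q.2)
        ({x : EuclideanSpace ℝ (Fin N) | 0 < x i1} ×ˢ Set.Ioi 0) ∧
      (∀ x : EuclideanSpace ℝ (Fin N), 0 < x i1 → ∀ t : ℝ, 0 < t →
        gradient (fun y => Ψ y t) x ≠ 0 ∧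
        deriv (fun s => Ψ x s) t =
          Fop p (gradient (fun y => Ψ y t) x) (hess (fun y => Ψ y t) x) ∧
        deriv (fun s => Ψ x s) t = (1/p') * hess (fun y => Ψ y t) x i1 i1)) ∧
    ((∀ x : EuclideanSpace ℝ (Fin N), 0 < x i1 →
        Filter.Tendsto (fun t => Ψ x t) (𝓝[>] (0:ℝ)) (𝓝 0)) ∧
      (∀ x : EuclideanSpace ℝ (Fin N), x i1 = 0 → ∀ t : ℝ, 0 < t → Ψ x t = 1)) ∧
    (∀ δ : ℝ, 0 < δ →
      TendstoUniformlyOn (fun (t : ℝ) (x : EuclideanSpace ℝ (Fin N)) => 4 * t * Real.log (Ψ x t))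
        (fun x => -p' * (x i1)^2) (𝓝[>] (0:ℝ))
        {x : EuclideanSpace ℝ (Fin N) | 0 ≤ x i1 ∧ x i1 ≤ δ}) :=
  stmt3_general N p p' hp hp' i1 Ψ hΨ

end
end
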